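/- With q as above, q(1) = P(LIS(T) = 1) = 1/(1 + √p). -/

import Mathlib

/-- Sign-decorated plane binary trees: leaves, and internal nodes carrying a sign
(`true` = ⊕, `false` = ⊖) together with two ordered subtrees. -/
inductive STree : Type
  | leaf : STree
  | node : Bool → STree → STree → STree

namespace STree

/-- `LIS t` is the maximal number of leaves of a positive subtree of `t`
(a subtree all of whose internal nodes carry ⊕): if the root carries ⊕ the LIS values of
the two subtrees add, if it carries ⊖ one takes the maximum. -/
def LIS : STree → ℕ
  | leaf => 1
  | node true l r => LIS l + LIS r
  | node false l r => max (LIS l) (LIS r)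

/-- The probability that the `p`-signed critical binary Bienaymé–Galton–Watson tree
(each vertex independently has 0 or 2 children with probability 1/2 each, and each
internal node independently carries ⊕ with probability `p` and ⊖ with probability `1-p`)
equals a given finite sign-decorated tree. -/
noncomputable def weight (p : ℝ) : STree → ℝ
  | leaf => 1 / 2
  | node s l r => (1 / 2) * (if s then p else 1 - p) * weight p l * weight p r

end STree

/-- `q p k = P(LIS(T) = k)` for the `p`-signed critical binary
Bienaymé–Galton–Watson tree `T`. -/
noncomputable def qLIS (p : ℝ) (k : ℕ) : ℝ :=
  ∑' t : {t : STree // t.LIS = k}, STree.weight p t.1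

/-!
A tree has `LIS = 1` exactly when it is a leaf or a ⊖-node over two trees with `LIS = 1`. Hence the
total weight `aₙ` of such trees of height at most `n` satisfies `a₀ = 1/2` and
`aₙ₊₁ = 1/2 + (1 - p)/2 · aₙ²`. This sequence increases to the smallest fixed point of
`x ↦ 1/2 + (1 - p)/2 · x²`, whose two fixed points are `1/(1 + √p)` and `1/(1 - √p)`.
-/

open Filter Topology

theorem hasSum_of_monotone_of_tendsto {ι : Type*} {f : ι → ℝ} (hf : 0 ≤ f) {s : ℕ → Finset ι}
    (hs : Monotone s) (hcover : ∀ i, ∃ n, i ∈ s n) {a : ℝ}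
    (ha : Tendsto (fun n => ∑ i ∈ s n, f i) atTop (𝓝 a)) : HasSum f a := by
  have hs_top := tendsto_atTop_finset_of_monotone hs hcover
  have hmono : Monotone fun n => ∑ i ∈ s n, f i := fun m n hmn =>
    Finset.sum_le_sum_of_subset_of_nonneg (hs hmn) fun i _ _ => hf i
  have hsum : Summable f := summable_of_sum_le hf fun u => by
    obtain ⟨n, hn⟩ := (tendsto_atTop.1 hs_top u).exists
    exact (Finset.sum_le_sum_of_subset_of_nonneg hn fun i _ _ => hf i).trans
      (hmono.ge_of_tendsto ha n)
  rw [← tendsto_nhds_unique (hsum.hasSum.comp hs_top) ha]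
  exact hsum.hasSum

theorem Monotone.exists_isFixedPt_tendsto {a : ℕ → ℝ} {Φ : ℝ → ℝ} (hΦ : Continuous Φ)
    (ha : Monotone a) (hrec : ∀ n, a (n + 1) = Φ (a n)) {c : ℝ} (hc : ∀ n, a n ≤ c) :
    ∃ L, L ≤ c ∧ Function.IsFixedPt Φ L ∧ Tendsto a atTop (𝓝 L) := by
  set L := ⨆ n, a n
  have hL : Tendsto a atTop (𝓝 L) := tendsto_atTop_ciSup ha ⟨c, Set.forall_mem_range.2 hc⟩
  have hshift : Tendsto (fun n => a (n + 1)) atTop (𝓝 (Φ L)) := by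
    simpa only [hrec, Function.comp_def] using (hΦ.tendsto L).comp hL
  exact ⟨L, ciSup_le hc, tendsto_nhds_unique hshift ((tendsto_add_atTop_iff_nat 1).2 hL), hL⟩

namespace STree

def height : STree → ℕ
  | leaf => 0
  | node _ l r => max l.height r.height + 1

theorem one_le_LIS : ∀ t : STree, 1 ≤ t.LIS
  | leaf => le_rfl
  | node true l _ => (one_le_LIS l).trans (Nat.le_add_right _ _)
  | node false l _ => (one_le_LIS l).trans (le_max_left _ _)

theorem LIS_node_eq_one {b : Bool} {l r : STree} :
    (node b l r).LIS = 1 ↔ b = false ∧ l.LIS = 1 ∧ r.LIS = 1 := by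
  have hl := one_le_LIS l
  have hr := one_le_LIS r
  cases b <;> simp [LIS] <;> omega

theorem weight_nonneg {p : ℝ} (hp0 : 0 ≤ p) (hp1 : p ≤ 1) : ∀ t : STree, 0 ≤ weight p t
  | leaf => by norm_num [weight]
  | node s l r => by
    have hs : (0 : ℝ) ≤ if s then p else 1 - p := by split <;> linarith
    have := weight_nonneg hp0 hp1 l
    have := weight_nonneg hp0 hp1 r
    simp only [weight]
    positivity

def minusNode : STree × STree ↪ STree :=
  ⟨fun q => node false q.1 q.2, fun _ _ h => by simpa [Prod.ext_iff] using h⟩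

@[simp]
theorem minusNode_apply (q : STree × STree) : minusNode q = node false q.1 q.2 := rfl

def lisOneTrees : ℕ → Finset STree
  | 0 => {leaf}
  | n + 1 => .cons leaf ((lisOneTrees n ×ˢ lisOneTrees n).map minusNode) (by simp)

theorem mem_lisOneTrees {n : ℕ} {t : STree} : t ∈ lisOneTrees n ↔ t.LIS = 1 ∧ t.height ≤ n := by
  induction n generalizing t with
  | zero => cases t <;> simp [lisOneTrees, LIS, height]
  | succ n ih =>
    cases t with
    | leaf => simp [lisOneTrees, LIS, height]
    | node b l r =>
      simp [lisOneTrees, LIS_node_eq_one, height, ih]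
      tauto

theorem lisOneTrees_mono : Monotone lisOneTrees := fun _ _ hmn _ ht =>
  have ht := mem_lisOneTrees.1 ht
  mem_lisOneTrees.2 ⟨ht.1, ht.2.trans hmn⟩

noncomputable def lisOneMap (p x : ℝ) : ℝ := 1 / 2 + 1 / 2 * (1 - p) * x ^ 2

theorem sum_weight_lisOneTrees_succ (p : ℝ) (n : ℕ) :
    ∑ t ∈ lisOneTrees (n + 1), weight p t =
      lisOneMap p (∑ t ∈ lisOneTrees n, weight p t) := by
  simp only [lisOneMap, lisOneTrees, Finset.sum_cons, Finset.sum_map, Finset.sum_product,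
    minusNode_apply, weight, Bool.false_eq_true, if_false]
  rw [sq, Finset.sum_mul_sum, Finset.mul_sum]
  congr 1
  refine Finset.sum_congr rfl fun _ _ => ?_
  rw [Finset.mul_sum]
  exact Finset.sum_congr rfl fun _ _ => by ring

section FixedPoint

variable {p : ℝ}

theorem lisOneMap_inv_one_add_sqrt (hp : 0 ≤ p) :
    lisOneMap p (1 / (1 + √p)) = 1 / (1 + √p) := by
  have hs := Real.sq_sqrt hp
  have : 0 < 1 + √p := by positivity
  unfold lisOneMap
  field_simp
  linear_combination hs

theorem eq_inv_one_add_sqrt_of_lisOneMap_eq (hp0 : 0 ≤ p) (hp1 : p ≤ 1) {x : ℝ}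
    (hx : lisOneMap p x = x) (hxr : x ≤ 1 / (1 + √p)) : x = 1 / (1 + √p) := by
  have hs := Real.sq_sqrt hp0
  have hs0 := Real.sqrt_nonneg p
  have hpos : 0 < 1 + √p := by positivity
  rw [le_div_iff₀ hpos] at hxr
  have hfactor : ((1 - √p) * x - 1) * ((1 + √p) * x - 1) = 0 := by
    unfold lisOneMap at hx
    linear_combination 2 * hx - x ^ 2 * hs
  rw [eq_div_iff hpos.ne', mul_comm]
  rcases mul_eq_zero.1 hfactor with h | h
  · have hx0 : 0 ≤ x := by
      have : 0 ≤ 1 - p := by linarith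
      rw [← hx, lisOneMap]
      positivity
    nlinarith [mul_nonneg hs0 hx0]
  · linarith

theorem sum_weight_lisOneTrees_le (hp0 : 0 ≤ p) (hp1 : p ≤ 1) (n : ℕ) :
    ∑ t ∈ lisOneTrees n, weight p t ≤ 1 / (1 + √p) := by
  induction n with
  | zero =>
    have hs1 : √p ≤ 1 := Real.sqrt_le_one.2 hp1
    simp only [lisOneTrees, Finset.sum_singleton, weight]
    gcongr
    linarith
  | succ n ih =>
    have := Finset.sum_nonneg fun t (_ : t ∈ lisOneTrees n) => weight_nonneg hp0 hp1 t
    have : 0 ≤ 1 - p := by linarith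
    rw [sum_weight_lisOneTrees_succ, ← lisOneMap_inv_one_add_sqrt hp0]
    unfold lisOneMap
    gcongr

end FixedPoint

theorem monotone_sum_weight_lisOneTrees {p : ℝ} (hp0 : 0 ≤ p) (hp1 : p ≤ 1) :
    Monotone fun n => ∑ t ∈ lisOneTrees n, weight p t := fun _ _ hmn =>
  Finset.sum_le_sum_of_subset_of_nonneg (lisOneTrees_mono hmn) fun t _ _ =>
    weight_nonneg hp0 hp1 t

theorem hasSum_weight_LIS_eq_one {p : ℝ} (hp0 : 0 ≤ p) (hp1 : p ≤ 1) {a : ℝ}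
    (ha : Tendsto (fun n => ∑ t ∈ lisOneTrees n, weight p t) atTop (𝓝 a)) :
    HasSum (fun t : {t : STree // t.LIS = 1} => weight p t) a := by
  refine hasSum_of_monotone_of_tendsto (fun t => weight_nonneg hp0 hp1 t.1)
    (s := fun n => (lisOneTrees n).subtype (·.LIS = 1))
    (fun _ _ hmn => Finset.subtype_mono (lisOneTrees_mono hmn))
    (fun t => ⟨t.1.height, Finset.mem_subtype.2 (mem_lisOneTrees.2 ⟨t.2, le_rfl⟩)⟩) ?_
  simpa only [Finset.sum_subtype_of_mem _ fun t ht => (mem_lisOneTrees.1 ht).1] using ha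

end STree

open STree

/-- `q(1) = P(LIS(T) = 1) = 1/(1 + √p)`. -/
theorem qLIS_one (p : ℝ) (hp : p ∈ Set.Ioo (0 : ℝ) 1) :
    qLIS p 1 = 1 / (1 + Real.sqrt p) := by
  obtain ⟨hp0, hp1⟩ := And.imp le_of_lt le_of_lt hp
  obtain ⟨L, hLr, hLfix, hL⟩ :=
    (monotone_sum_weight_lisOneTrees hp0 hp1).exists_isFixedPt_tendsto
      (by unfold lisOneMap; fun_prop) (sum_weight_lisOneTrees_succ p)
      (sum_weight_lisOneTrees_le hp0 hp1)
  rw [← eq_inv_one_add_sqrt_of_lisOneMap_eq hp0 hp1 hLfix hLr]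
  exact (hasSum_weight_LIS_eq_one hp0 hp1 hL).tsum_eq
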